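/- arXiv:2208.12355 — 4 statements merged into one kernel-verified Lean document; each statement's English description precedes it below -/
import Mathlib

section
/- Let I ⊆ ℝ be an open interval and U ⊆ ℝⁿ an open set. Let f : I × U → ℝⁿ be continuous, and let ψ : I × U → ℝᵐ be continuously differentiable. Suppose Λ : I × U → M_{m×n}(ℝ) is a continuous matrix-valued function such that for every continuously differentiable curve x : I → U, Λ(t, x(t)) · (ẋ(t) − f(t, x(t))) = d/dt [ψ(t, x(t))] for all t ∈ I. Then Λ(t, x) = ∂ₓψ(t, x) and Λ(t, x) · f(t, x) = −∂ₜψ(t, x) for all (t, x) ∈ I × U. In particular, the conservation law multiplier of the form Λ(t, x) associated with ψ is unique and equals the Jacobian ∂ₓψ. -/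
/-!
Plugging into the multiplier identity a C¹ curve through `x₀` with velocity `v` at `t₀`
gives `Λ(t₀, x₀) (v - f(t₀, x₀)) = Dψ(t₀, x₀) (1, v)` by the chain rule. Such curves exist
for every `v` even though they must stay in `U` for all times: take
`x₀ + a sin((t - t₀)/a) • v` with `a` small. Both identities then follow by comparing `v`
with `v = 0`, which is linear algebra.
-/

theorem LinearMap.eq_comp_inr_of_forall_apply_sub_eq {R M N : Type*} [Ring R]
    [AddCommGroup M] [Module R M] [AddCommGroup N] [Module R N]
    {A : M →ₗ[R] N} {D : R × M →ₗ[R] N} {w : M} (h : ∀ v, A (v - w) = D (1, v)) :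
    A = D ∘ₗ LinearMap.inr R R M ∧ A w = -D (1, 0) := by
  have hw : A w = -D (1, 0) := by rw [← h 0, zero_sub, map_neg, neg_neg]
  refine ⟨LinearMap.ext fun v => ?_, hw⟩
  calc A v = A (v - w) + A w := by rw [map_sub, sub_add_cancel]
    _ = D ((1, v) - (1, 0)) := by rw [h, hw, ← sub_eq_add_neg, map_sub]
    _ = D (0, v) := by simp

theorem Real.hasDerivAt_mul_sin_div_sub (a t₀ : ℝ) (ha : a ≠ 0) :
    HasDerivAt (fun s => a * Real.sin ((s - t₀) / a)) 1 t₀ := by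
  have hinner : HasDerivAt (fun s : ℝ => (s - t₀) / a) (1 / a) t₀ :=
    ((hasDerivAt_id t₀).sub_const t₀).div_const a
  have h := ((Real.hasDerivAt_sin _).comp t₀ hinner).const_mul a
  rwa [sub_self, zero_div, Real.cos_zero, one_mul, mul_one_div_cancel ha] at h

section Curves

variable {E F : Type*} [NormedAddCommGroup E] [NormedSpace ℝ E]
  [NormedAddCommGroup F] [NormedSpace ℝ F]

theorem exists_contDiff_mem_hasDerivAt {U : Set E} (hU : IsOpen U) {x₀ : E} (hx₀ : x₀ ∈ U)
    (t₀ : ℝ) (v : E) :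
    ∃ c : ℝ → E, ContDiff ℝ 1 c ∧ (∀ s, c s ∈ U) ∧ c t₀ = x₀ ∧ HasDerivAt c v t₀ := by
  obtain ⟨ε, hε, hball⟩ := Metric.isOpen_iff.1 hU x₀ hx₀
  set a := ε / (‖v‖ + 1)
  have ha : 0 < a := by positivity
  have hav : a * ‖v‖ < ε := by
    rw [div_mul_eq_mul_div, div_lt_iff₀ (by positivity)]
    nlinarith [norm_nonneg v]
  refine ⟨fun s => x₀ + (a * Real.sin ((s - t₀) / a)) • v, ?_, fun s => hball ?_, by simp, ?_⟩
  · fun_prop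
  · rw [Metric.mem_ball, dist_eq_norm, add_sub_cancel_left, norm_smul, Real.norm_eq_abs,
      abs_mul, abs_of_pos ha]
    calc a * |Real.sin ((s - t₀) / a)| * ‖v‖ ≤ a * 1 * ‖v‖ := by
          gcongr; exact Real.abs_sin_le_one _
      _ < ε := by rwa [mul_one]
  · simpa using ((Real.hasDerivAt_mul_sin_div_sub a t₀ ha.ne').smul_const v).const_add x₀

theorem HasFDerivAt.comp_prodMk_hasDerivAt {Φ : ℝ × E → F} {D : ℝ × E →L[ℝ] F} {c : ℝ → E}
    {v : E} {t : ℝ} (hΦ : HasFDerivAt Φ D (t, c t)) (hc : HasDerivAt c v t) :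
    HasDerivAt (fun s => Φ (s, c s)) (D (1, v)) t :=
  hΦ.comp_hasDerivAt t ((hasDerivAt_id t).prodMk hc)

end Curves

theorem multiplier_correspondence_identities_general {n m : ℕ}
    (I : Set ℝ) (hIopen : IsOpen I)
    (U : Set (Fin n → ℝ)) (hUopen : IsOpen U)
    (f : ℝ → (Fin n → ℝ) → (Fin n → ℝ))
    (ψ : ℝ → (Fin n → ℝ) → (Fin m → ℝ))
    (hψ : ContDiffOn ℝ 1 (fun p : ℝ × (Fin n → ℝ) => ψ p.1 p.2) (I ×ˢ U))
    (Λ : ℝ → (Fin n → ℝ) → Matrix (Fin m) (Fin n) ℝ)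
    (hmult : ∀ x : ℝ → (Fin n → ℝ), ContDiffOn ℝ 1 x I → Set.MapsTo x I U →
      ∀ t ∈ I, (Λ t (x t)).mulVec (deriv x t - f t (x t))
        = deriv (fun s => ψ s (x s)) t) :
    ∀ t ∈ I, ∀ x ∈ U,
      Λ t x = LinearMap.toMatrix'
          (fderiv ℝ (fun v => ψ t v) x : (Fin n → ℝ) →ₗ[ℝ] (Fin m → ℝ)) ∧
      (Λ t x).mulVec (f t x) = - deriv (fun s => ψ s x) t := by
  intro t₀ ht x₀ hx
  set D := fderiv ℝ (fun p : ℝ × (Fin n → ℝ) => ψ p.1 p.2) (t₀, x₀)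
  have hD : HasFDerivAt (fun p : ℝ × (Fin n → ℝ) => ψ p.1 p.2) D (t₀, x₀) :=
    ((hψ.differentiableOn one_ne_zero).differentiableAt
      ((hIopen.prod hUopen).mem_nhds ⟨ht, hx⟩)).hasFDerivAt
  have hcurves : ∀ v, Matrix.toLin' (Λ t₀ x₀) (v - f t₀ x₀) = D (1, v) := by
    intro v
    obtain ⟨c, hc, hcU, hc₀, hcv⟩ := exists_contDiff_mem_hasDerivAt hUopen hx t₀ v
    have := hmult c hc.contDiffOn (fun s _ => hcU s) t₀ ht
    have hDc : HasFDerivAt _ D (t₀, c t₀) := hc₀ ▸ hD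
    rwa [hcv.deriv, (hDc.comp_prodMk_hasDerivAt hcv).deriv, hc₀] at this
  obtain ⟨hΛ, hΛf⟩ := LinearMap.eq_comp_inr_of_forall_apply_sub_eq hcurves
  have hψx : fderiv ℝ (fun v => ψ t₀ v) x₀ = D.comp (ContinuousLinearMap.inr ℝ ℝ _) :=
    (hD.comp x₀ (hasFDerivAt_prodMk_right t₀ x₀)).fderiv
  have hψt : deriv (fun s => ψ s x₀) t₀ = D (1, 0) :=
    (hD.comp_prodMk_hasDerivAt (c := fun _ => x₀) (hasDerivAt_const t₀ x₀)).deriv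
  refine ⟨?_, by rw [hψt, ← Matrix.toLin'_apply, hΛf]; rfl⟩
  rw [hψx, ← LinearMap.toMatrix'_toLin' (Λ t₀ x₀), hΛ]
  rfl

/-- If `Λ` is a conservation law multiplier of `F(t,x,ẋ) = ẋ - f(t,x)`
associated with `ψ`, i.e. `Λ(t,x(t)) ⬝ (ẋ(t) - f(t,x(t))) = d/dt ψ(t,x(t))` along **all**
C¹ curves `x : I → U`, then `Λ(t,x) = ∂ₓψ(t,x)` (the Jacobian of `ψ` in `x`) and
`Λ(t,x) f(t,x) = -∂ₜψ(t,x)` on `I × U`; in particular such a multiplier is unique. -/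
theorem multiplier_correspondence_identities {n m : ℕ}
    (I : Set ℝ) (hIopen : IsOpen I) (hIinterval : I.OrdConnected)
    (U : Set (Fin n → ℝ)) (hUopen : IsOpen U)
    (f : ℝ → (Fin n → ℝ) → (Fin n → ℝ))
    (hf_cont : ContinuousOn (fun p : ℝ × (Fin n → ℝ) => f p.1 p.2) (I ×ˢ U))
    (ψ : ℝ → (Fin n → ℝ) → (Fin m → ℝ))
    (hψ : ContDiffOn ℝ 1 (fun p : ℝ × (Fin n → ℝ) => ψ p.1 p.2) (I ×ˢ U))
    (Λ : ℝ → (Fin n → ℝ) → Matrix (Fin m) (Fin n) ℝ)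
    (hΛ_cont : ContinuousOn (fun p : ℝ × (Fin n → ℝ) => Λ p.1 p.2) (I ×ˢ U))
    (hmult : ∀ x : ℝ → (Fin n → ℝ), ContDiffOn ℝ 1 x I → Set.MapsTo x I U →
      ∀ t ∈ I, (Λ t (x t)).mulVec (deriv x t - f t (x t))
        = deriv (fun s => ψ s (x s)) t) :
    ∀ t ∈ I, ∀ x ∈ U,
      Λ t x = LinearMap.toMatrix'
          (fderiv ℝ (fun v => ψ t v) x : (Fin n → ℝ) →ₗ[ℝ] (Fin m → ℝ)) ∧
      (Λ t x).mulVec (f t x) = - deriv (fun s => ψ s x) t :=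
  multiplier_correspondence_identities_general I hIopen U hUopen f ψ hψ Λ hmult
end

section
/- Let I ⊆ ℝ be an open interval and U ⊆ ℝⁿ an open set. Let f : I × U → ℝⁿ be continuous and locally Lipschitz in the state variable, and let ψ : I × U → ℝᵐ be continuously differentiable. Suppose ψ is a conserved quantity of ẋ = f(t, x), i.e. t ↦ ψ(t, x(t)) is constant along every solution curve. Then Λ(t, x) := ∂ₓψ(t, x) is a conservation law multiplier associated with ψ: for every continuously differentiable curve x : I → U (not necessarily a solution), Λ(t, x(t)) · (ẋ(t) − f(t, x(t))) = d/dt [ψ(t, x(t))] for all t ∈ I. -/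
/-!
Through every point `(t, x₀)` of `I × U` passes a local solution of `ẋ = f(t, x)`
(Picard–Lindelöf). Since `ψ` is constant along it, the total derivative `Dψ(t, x₀)` annihilates
`(1, f(t, x₀))`. Along an arbitrary C¹ curve `x` the chain rule then gives
`d/dt ψ(t, x(t)) = Dψ (1, ẋ) = Dψ (1, f) + Dψ (0, ẋ - f) = ∂ₓψ (ẋ - f)`.
-/

open Set Metric Filter Topology NNReal

section LocalExistence

variable {E : Type*} [NormedAddCommGroup E] [ProperSpace E]
  {I : Set ℝ} {U : Set E} {f : ℝ → E → E} {t₀ : ℝ} {x₀ : E}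

theorem exists_isPicardLindelof_of_locallyLipschitzOn
    (hf_cont : ContinuousOn (fun p : ℝ × E => f p.1 p.2) (I ×ˢ U))
    (hf_lip : ∀ t ∈ I, ∀ x ∈ U, ∃ ε > (0 : ℝ), ∃ K : ℝ≥0,
      ∀ s ∈ ball t ε ∩ I, LipschitzOnWith K (f s) (ball x ε ∩ U))
    (hI : I ∈ 𝓝 t₀) (hU : U ∈ 𝓝 x₀) :
    ∃ (δ : ℝ) (hδ : 0 < δ) (a L K : ℝ≥0), IsPicardLindelof f (tmin := t₀ - δ)
      (tmax := t₀ + δ) ⟨t₀, by simp [hδ.le]⟩ x₀ a 0 L K := by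
  obtain ⟨ε, hε, K, hK⟩ := hf_lip t₀ (mem_of_mem_nhds hI) x₀ (mem_of_mem_nhds hU)
  obtain ⟨r, hr, hr_sub⟩ := nhds_basis_closedBall.mem_iff.mp
    (inter_mem (ball_mem_nhds t₀ hε) hI)
  obtain ⟨a, ha, ha_sub⟩ := nhds_basis_closedBall.mem_iff.mp
    (inter_mem (ball_mem_nhds x₀ hε) hU)
  obtain ⟨C, hC⟩ := ((isCompact_closedBall t₀ r).prod
    (isCompact_closedBall x₀ a)).exists_bound_of_continuousOn
      (hf_cont.mono (prod_mono (fun t ht => (hr_sub ht).2) (fun x hx => (ha_sub hx).2)))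
  set L := C.toNNReal
  set δ := min r (a / (L + 1))
  have hδ : 0 < δ := lt_min hr (by positivity)
  have hIcc : Icc (t₀ - δ) (t₀ + δ) ⊆ closedBall t₀ r := by
    rw [Real.closedBall_eq_Icc]
    have := min_le_left r (a / (L + 1))
    exact Icc_subset_Icc (by linarith) (by linarith)
  refine ⟨δ, hδ, ⟨a, ha.le⟩, L, K, ⟨?_, ?_, ?_, ?_⟩⟩
  · intro t ht
    exact (hK t (hr_sub (hIcc ht))).mono ha_sub
  · intro x hx
    exact hf_cont.comp (continuous_id.prodMk continuous_const).continuousOn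
      (fun t ht => ⟨(hr_sub (hIcc ht)).2, (ha_sub hx).2⟩)
  · intro t ht x hx
    exact (hC (t, x) ⟨hIcc ht, hx⟩).trans (Real.le_coe_toNNReal C)
  · simp only [add_sub_cancel_left, sub_sub_cancel, max_self, NNReal.coe_zero, sub_zero]
    calc (L : ℝ) * δ ≤ L * (a / (L + 1)) := by gcongr; exact min_le_right _ _
      _ ≤ a := by rw [mul_div_assoc', div_le_iff₀ (by positivity)]; nlinarith

theorem exists_eventually_hasDerivAt_of_locallyLipschitzOn [NormedSpace ℝ E]
    (hf_cont : ContinuousOn (fun p : ℝ × E => f p.1 p.2) (I ×ˢ U))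
    (hf_lip : ∀ t ∈ I, ∀ x ∈ U, ∃ ε > (0 : ℝ), ∃ K : ℝ≥0,
      ∀ s ∈ ball t ε ∩ I, LipschitzOnWith K (f s) (ball x ε ∩ U))
    (hI : I ∈ 𝓝 t₀) (hU : U ∈ 𝓝 x₀) :
    ∃ γ : ℝ → E, γ t₀ = x₀ ∧ ∀ᶠ t in 𝓝 t₀, t ∈ I ∧ γ t ∈ U ∧ HasDerivAt γ (f t (γ t)) t := by
  obtain ⟨δ, hδ, a, L, K, hpl⟩ :=
    exists_isPicardLindelof_of_locallyLipschitzOn hf_cont hf_lip hI hU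
  obtain ⟨γ, hγ₀, hγ⟩ := hpl.exists_eq_forall_mem_Icc_hasDerivWithinAt₀
  have hsol : ∀ᶠ t in 𝓝 t₀, HasDerivAt γ (f t (γ t)) t :=
    eventually_of_mem (Ioo_mem_nhds (by linarith) (by linarith)) fun t ht =>
      (hγ t (Ioo_subset_Icc_self ht)).hasDerivAt (Icc_mem_nhds ht.1 ht.2)
  have hγU : ∀ᶠ t in 𝓝 t₀, γ t ∈ U :=
    hsol.self_of_nhds.continuousAt.preimage_mem_nhds (hγ₀ ▸ hU)
  exact ⟨γ, hγ₀, Eventually.and hI (hγU.and hsol)⟩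

end LocalExistence

section ChainRule

variable {E F : Type*} [NormedAddCommGroup E] [NormedSpace ℝ E] [NormedAddCommGroup F]
  [NormedSpace ℝ F] {Ψ : ℝ × E → F} {D : ℝ × E →L[ℝ] F} {t : ℝ}

theorem HasFDerivAt.hasDerivAt_comp_graph {γ : ℝ → E} {v : E}
    (hΨ : HasFDerivAt Ψ D (t, γ t)) (hγ : HasDerivAt γ v t) :
    HasDerivAt (fun s => Ψ (s, γ s)) (D (1, v)) t :=
  hΨ.comp_hasDerivAt t ((hasDerivAt_id t).prodMk hγ)

theorem HasFDerivAt.apply_one_eq_zero_of_eventually_const {γ : ℝ → E} {v : E}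
    (hΨ : HasFDerivAt Ψ D (t, γ t)) (hγ : HasDerivAt γ v t)
    (hconst : ∀ᶠ s in 𝓝 t, Ψ (s, γ s) = Ψ (t, γ t)) : D (1, v) = 0 :=
  (hΨ.hasDerivAt_comp_graph hγ).unique ((hasDerivAt_const t _).congr_of_eventuallyEq hconst)

theorem HasFDerivAt.fderiv_right {x : E} (hΨ : HasFDerivAt Ψ D (t, x)) :
    fderiv ℝ (fun y => Ψ (t, y)) x = D.comp (.inr ℝ ℝ E) :=
  (hΨ.comp x (hasFDerivAt_prodMk_right t x)).fderiv

end ChainRule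

section ConservedQuantity

variable {E F : Type*} [NormedAddCommGroup E] [NormedSpace ℝ E]

def IsConservedQuantityOn (f : ℝ → E → E) (ψ : ℝ → E → F) (I : Set ℝ) (U : Set E) : Prop :=
  ∀ J : Set ℝ, IsOpen J → J.OrdConnected → J ⊆ I →
    ∀ x : ℝ → E, MapsTo x J U → (∀ t ∈ J, HasDerivAt x (f t (x t)) t) →
    ∀ s ∈ J, ∀ t ∈ J, ψ s (x s) = ψ t (x t)

theorem IsConservedQuantityOn.fderiv_apply_one_field_eq_zero [ProperSpace E]
    [NormedAddCommGroup F] [NormedSpace ℝ F]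
    {f : ℝ → E → E} {ψ : ℝ → E → F} {I : Set ℝ} {U : Set E}
    (hψ : IsConservedQuantityOn f ψ I U) (hI : IsOpen I) (hU : IsOpen U)
    (hf_cont : ContinuousOn (fun p : ℝ × E => f p.1 p.2) (I ×ˢ U))
    (hf_lip : ∀ t ∈ I, ∀ x ∈ U, ∃ ε > (0 : ℝ), ∃ K : ℝ≥0,
      ∀ s ∈ ball t ε ∩ I, LipschitzOnWith K (f s) (ball x ε ∩ U))
    {t : ℝ} (ht : t ∈ I) {x₀ : E} (hx₀ : x₀ ∈ U) {D : ℝ × E →L[ℝ] F}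
    (hD : HasFDerivAt (fun p : ℝ × E => ψ p.1 p.2) D (t, x₀)) :
    D (1, f t x₀) = 0 := by
  obtain ⟨γ, rfl, hγ⟩ := exists_eventually_hasDerivAt_of_locallyLipschitzOn hf_cont hf_lip
    (hI.mem_nhds ht) (hU.mem_nhds hx₀)
  obtain ⟨η, hη, hJ⟩ := (nhds_basis_Ioo_pos t).eventually_iff.mp hγ
  have htJ : t ∈ Ioo (t - η) (t + η) := ⟨by linarith, by linarith⟩
  have hconst : ∀ s ∈ Ioo (t - η) (t + η), ψ s (γ s) = ψ t (γ t) := fun s hs =>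
    hψ _ isOpen_Ioo ordConnected_Ioo (fun s hs => (hJ hs).1) γ
      (fun s hs => (hJ hs).2.1) (fun s hs => (hJ hs).2.2) s hs t htJ
  exact hD.apply_one_eq_zero_of_eventually_const (hJ htJ).2.2
    (eventually_of_mem (isOpen_Ioo.mem_nhds htJ) hconst)

end ConservedQuantity

theorem jacobian_is_conservation_law_multiplier_general {n m : ℕ}
    (I : Set ℝ) (hIopen : IsOpen I)
    (U : Set (Fin n → ℝ)) (hUopen : IsOpen U)
    (f : ℝ → (Fin n → ℝ) → (Fin n → ℝ))
    (hf_cont : ContinuousOn (fun p : ℝ × (Fin n → ℝ) => f p.1 p.2) (I ×ˢ U))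
    (hf_lip : ∀ t ∈ I, ∀ x ∈ U, ∃ ε > (0 : ℝ), ∃ K : NNReal,
      ∀ s ∈ Metric.ball t ε ∩ I, LipschitzOnWith K (f s) (Metric.ball x ε ∩ U))
    (ψ : ℝ → (Fin n → ℝ) → (Fin m → ℝ))
    (hψ : ContDiffOn ℝ 1 (fun p : ℝ × (Fin n → ℝ) => ψ p.1 p.2) (I ×ˢ U))
    (hconserved : ∀ J : Set ℝ, IsOpen J → J.OrdConnected → J ⊆ I →
      ∀ x : ℝ → (Fin n → ℝ), Set.MapsTo x J U →
      (∀ t ∈ J, HasDerivAt x (f t (x t)) t) →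
      ∀ s ∈ J, ∀ t ∈ J, ψ s (x s) = ψ t (x t))
    (Λ : ℝ → (Fin n → ℝ) → Matrix (Fin m) (Fin n) ℝ)
    (hΛ : ∀ t x, Λ t x = LinearMap.toMatrix'
        (fderiv ℝ (fun v => ψ t v) x : (Fin n → ℝ) →ₗ[ℝ] (Fin m → ℝ))) :
    ∀ x : ℝ → (Fin n → ℝ), ContDiffOn ℝ 1 x I → Set.MapsTo x I U →
      ∀ t ∈ I, (Λ t (x t)).mulVec (deriv x t - f t (x t))
        = deriv (fun s => ψ s (x s)) t := by
  intro x hx hxU t ht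
  have hD := ((hψ.differentiableOn one_ne_zero).differentiableAt
    ((hIopen.prod hUopen).mem_nhds (x := (t, x t)) ⟨ht, hxU ht⟩)).hasFDerivAt
  set D := fderiv ℝ (fun p : ℝ × (Fin n → ℝ) => ψ p.1 p.2) (t, x t)
  have hfield : D (1, f t (x t)) = 0 :=
    IsConservedQuantityOn.fderiv_apply_one_field_eq_zero hconserved hIopen hUopen hf_cont hf_lip
      ht (hxU ht) hD
  have hcurve := hD.hasDerivAt_comp_graph
    ((hx.differentiableOn one_ne_zero).differentiableAt (hIopen.mem_nhds ht)).hasDerivAt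
  rw [hcurve.deriv, hΛ, hD.fderiv_right, LinearMap.toMatrix'_mulVec]
  calc D.comp (.inr ℝ ℝ _) (deriv x t - f t (x t))
      = D ((1, deriv x t) - (1, f t (x t))) := by simp
    _ = D (1, deriv x t) := by rw [map_sub, hfield, sub_zero]

/-- If `ψ` is a conserved quantity of `ẋ = f(t,x)` (constant along every
solution curve), with `f` continuous and locally Lipschitz in the state and `ψ` of class C¹,
then `Λ(t,x) := ∂ₓψ(t,x)` is a conservation law multiplier associated with `ψ`: along every
C¹ curve `x : I → U` (not necessarily a solution),
`Λ(t,x(t)) ⬝ (ẋ(t) - f(t,x(t))) = d/dt ψ(t,x(t))`. -/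
theorem jacobian_is_conservation_law_multiplier {n m : ℕ}
    (I : Set ℝ) (hIopen : IsOpen I) (hIinterval : I.OrdConnected)
    (U : Set (Fin n → ℝ)) (hUopen : IsOpen U)
    (f : ℝ → (Fin n → ℝ) → (Fin n → ℝ))
    (hf_cont : ContinuousOn (fun p : ℝ × (Fin n → ℝ) => f p.1 p.2) (I ×ˢ U))
    (hf_lip : ∀ t ∈ I, ∀ x ∈ U, ∃ ε > (0 : ℝ), ∃ K : NNReal,
      ∀ s ∈ Metric.ball t ε ∩ I, LipschitzOnWith K (f s) (Metric.ball x ε ∩ U))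
    (ψ : ℝ → (Fin n → ℝ) → (Fin m → ℝ))
    (hψ : ContDiffOn ℝ 1 (fun p : ℝ × (Fin n → ℝ) => ψ p.1 p.2) (I ×ˢ U))
    (hconserved : ∀ J : Set ℝ, IsOpen J → J.OrdConnected → J ⊆ I →
      ∀ x : ℝ → (Fin n → ℝ), Set.MapsTo x J U →
      (∀ t ∈ J, HasDerivAt x (f t (x t)) t) →
      ∀ s ∈ J, ∀ t ∈ J, ψ s (x s) = ψ t (x t))
    (Λ : ℝ → (Fin n → ℝ) → Matrix (Fin m) (Fin n) ℝ)
    (hΛ : ∀ t x, Λ t x = LinearMap.toMatrix'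
        (fderiv ℝ (fun v => ψ t v) x : (Fin n → ℝ) →ₗ[ℝ] (Fin m → ℝ))) :
    ∀ x : ℝ → (Fin n → ℝ), ContDiffOn ℝ 1 x I → Set.MapsTo x I U →
      ∀ t ∈ I, (Λ t (x t)).mulVec (deriv x t - f t (x t))
        = deriv (fun s => ψ s (x s)) t :=
  jacobian_is_conservation_law_multiplier_general I hIopen U hUopen f hf_cont hf_lip ψ hψ hconserved
    Λ hΛ
end

section
/- Let m < n, q ≥ 1. Let A ∈ M_{m×n}(ℝ) have full row rank, f ∈ ℝⁿ and c ∈ ℝᵐ satisfy A f = −c. Suppose (A_τ)_{τ>0}, (f_τ)_{τ>0}, (c_τ)_{τ>0} are families of matrices and vectors satisfying ‖A_τ − A‖ ≤ K₁ τ^q, ‖f_τ − f‖₂ ≤ K₂ τ^q and ‖c_τ − c‖₂ ≤ K₃ τ^q for all τ > 0, with constants K₁, K₂, K₃ > 0 independent of τ. Then there exist τ₀ > 0 and C > 0 independent of τ such that for all 0 < τ < τ₀: A_τ A_τᵀ is invertible, the Minimal ℓ² Norm DMM vector f_MN^τ := f_τ − A_τ⁺ (A_τ f_τ + c_τ) with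 A_τ⁺ := A_τᵀ(A_τ A_τᵀ)⁻¹ satisfies ‖f_MN^τ − f‖₂ ≤ C τ^q, and moreover ‖A_τ f_MN^τ + c‖₂ ≤ C τ^q. -/
/-!
Because `A f = -c`, the MN-DMM error satisfies the exact identity
`f_MN - f = (g - f) - B⁺ (B (g - f) + (B - A) f + (d - c))` for data `(B, g, d)`, so it is
bounded by the data errors times `‖B⁺‖` and `‖B‖`. Full row rank makes `A Aᵀ` invertible, and
`B ↦ Bᵀ (B Bᵀ)⁻¹` is continuous wherever `B Bᵀ` is invertible, so `B⁺` stays bounded near `A`.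
The residual is exact: `B f_MN = -d`, hence `B f_MN + c = c - d`.
-/

open scoped Matrix Matrix.Norms.L2Operator

noncomputable def euclNorm {k : ℕ} (v : Fin k → ℝ) : ℝ :=
  ‖(EuclideanSpace.equiv (Fin k) ℝ).symm v‖

open Filter Topology

theorem Matrix.isUnit_of_rank_eq_card {ι K : Type*} [Fintype ι] [DecidableEq ι] [Field K]
    {B : Matrix ι ι K} (h : B.rank = Fintype.card ι) : IsUnit B := by
  rw [← mulVec_surjective_iff_isUnit, ← coe_mulVecLin, ← LinearMap.range_eq_top]
  apply Submodule.eq_top_of_finrank_eq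
  rw [← rank, h, Module.finrank_fintype_fun_eq_card]

theorem tendsto_nhdsGT_of_norm_sub_le_pow {E : Type*} [SeminormedAddCommGroup E] {x : ℝ → E}
    {a : E} {K : ℝ} {q : ℕ} (hq : q ≠ 0) (h : ∀ τ : ℝ, 0 < τ → ‖x τ - a‖ ≤ K * τ ^ q) :
    Tendsto x (𝓝[>] 0) (𝓝 a) := by
  have hcont : Continuous fun τ : ℝ => K * τ ^ q := by fun_prop
  have hK : Tendsto (fun τ : ℝ => K * τ ^ q) (𝓝[>] 0) (𝓝 0) :=
    (hcont.tendsto' 0 0 (by simp [hq])).mono_left nhdsWithin_le_nhds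
  exact tendsto_iff_norm_sub_tendsto_zero.mpr <|
    squeeze_zero' (Eventually.of_forall fun _ => norm_nonneg _)
      (eventually_nhdsWithin_of_forall h) hK

section euclNorm

variable {k l : ℕ}

theorem euclNorm_nonneg (v : Fin k → ℝ) : 0 ≤ euclNorm v := norm_nonneg _

theorem euclNorm_add_le (u v : Fin k → ℝ) : euclNorm (u + v) ≤ euclNorm u + euclNorm v := by
  simpa only [euclNorm, map_add] using norm_add_le _ _

theorem euclNorm_sub_le (u v : Fin k → ℝ) : euclNorm (u - v) ≤ euclNorm u + euclNorm v := by
  simpa only [euclNorm, map_sub] using norm_sub_le _ _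

theorem euclNorm_sub_comm (u v : Fin k → ℝ) : euclNorm (u - v) = euclNorm (v - u) := by
  simp only [euclNorm, map_sub, norm_sub_rev]

theorem euclNorm_mulVec_le (M : Matrix (Fin k) (Fin l) ℝ) (v : Fin l → ℝ) :
    euclNorm (M *ᵥ v) ≤ ‖M‖ * euclNorm v :=
  Matrix.l2_opNorm_mulVec M _

end euclNorm

namespace Matrix

variable {m n : Type*} [Fintype m] [Fintype n] [DecidableEq m]

noncomputable def rightPinv (B : Matrix m n ℝ) : Matrix n m ℝ := Bᵀ * (B * Bᵀ)⁻¹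

/-- The vector `f_MN` of the paper, computed from the data `(B, g, d)` in place of
`(A_τ, f_τ, c_τ)`. -/
noncomputable def mnDMM (B : Matrix m n ℝ) (g : n → ℝ) (d : m → ℝ) : n → ℝ :=
  g - rightPinv B *ᵥ (B *ᵥ g + d)

theorem mulVec_mnDMM {B : Matrix m n ℝ} (hB : IsUnit (B * Bᵀ)) (g : n → ℝ) (d : m → ℝ) :
    B *ᵥ mnDMM B g d = -d := by
  rw [mnDMM, rightPinv, mulVec_sub, mulVec_mulVec, ← Matrix.mul_assoc,
    mul_nonsing_inv _ ((isUnit_iff_isUnit_det _).mp hB), one_mulVec, sub_add_cancel_left]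

theorem mnDMM_sub_eq {A B : Matrix m n ℝ} {f : n → ℝ} {c : m → ℝ} (hfc : A *ᵥ f = -c)
    (g : n → ℝ) (d : m → ℝ) :
    mnDMM B g d - f = (g - f) - rightPinv B *ᵥ (B *ᵥ (g - f) + (B - A) *ᵥ f + (d - c)) := by
  rw [mnDMM, sub_right_comm, mulVec_sub, sub_mulVec, hfc]
  congr 2
  abel

theorem eventually_isUnit_mul_transpose {A : Matrix m n ℝ} (hA : IsUnit (A * Aᵀ)) :
    ∀ᶠ B in 𝓝 A, IsUnit (B * Bᵀ) := by
  have hdet : ContinuousAt (fun B : Matrix m n ℝ => (B * Bᵀ).det) A :=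
    (continuous_id.matrix_mul continuous_id.matrix_transpose).matrix_det.continuousAt
  filter_upwards [hdet.eventually_ne ((isUnit_iff_isUnit_det _).mp hA).ne_zero] with B hB
  exact (isUnit_iff_isUnit_det _).mpr hB.isUnit

theorem continuousAt_rightPinv {A : Matrix m n ℝ} (hA : IsUnit (A * Aᵀ)) :
    ContinuousAt rightPinv A := by
  have hdet : (A * Aᵀ).det ≠ 0 := ((isUnit_iff_isUnit_det _).mp hA).ne_zero
  have hinv : ContinuousAt (fun B : Matrix m n ℝ => (B * Bᵀ)⁻¹) A :=
    (continuousAt_matrix_inv _ (NormedRing.inverse_continuousAt (Units.mk0 _ hdet))).comp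
      (f := fun B : Matrix m n ℝ => B * Bᵀ)
      (continuous_id.matrix_mul continuous_id.matrix_transpose).continuousAt
  exact (continuous_fst.matrix_mul continuous_snd).continuousAt.comp
    (f := fun B : Matrix m n ℝ => (Bᵀ, (B * Bᵀ)⁻¹))
    (continuous_id.matrix_transpose.continuousAt.prodMk hinv)

theorem exists_pos_eventually_isUnit_and_norm_le [DecidableEq n] {A : Matrix m n ℝ} (hA : IsUnit (A * Aᵀ)) :
    ∃ P > 0, ∀ᶠ B in 𝓝 A, IsUnit (B * Bᵀ) ∧ ‖rightPinv B‖ ≤ P ∧ ‖B‖ ≤ P := by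
  refine ⟨max ‖rightPinv A‖ ‖A‖ + 1, by positivity,
    (eventually_isUnit_mul_transpose hA).and (.and ?_ ?_)⟩
  · exact (continuousAt_rightPinv hA).norm.tendsto.eventually_le_const
      (by linarith [le_max_left ‖rightPinv A‖ ‖A‖])
  · exact continuous_norm.continuousAt.tendsto.eventually_le_const
      (by linarith [le_max_right ‖rightPinv A‖ ‖A‖])

end Matrix

open Matrix

theorem euclNorm_mnDMM_sub_le {m n : ℕ} {A : Matrix (Fin m) (Fin n) ℝ} {f : Fin n → ℝ}
    {c : Fin m → ℝ} (hfc : A *ᵥ f = -c) (B : Matrix (Fin m) (Fin n) ℝ) (g : Fin n → ℝ)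
    (d : Fin m → ℝ) :
    euclNorm (mnDMM B g d - f) ≤ (1 + ‖rightPinv B‖ * ‖B‖) * euclNorm (g - f) +
      ‖rightPinv B‖ * (‖B - A‖ * euclNorm f + euclNorm (d - c)) := by
  rw [mnDMM_sub_eq hfc]
  set e := B *ᵥ (g - f) + (B - A) *ᵥ f + (d - c)
  have he : euclNorm e ≤ ‖B‖ * euclNorm (g - f) + ‖B - A‖ * euclNorm f + euclNorm (d - c) :=
    (euclNorm_add_le _ _).trans (add_le_add_left ((euclNorm_add_le _ _).trans
      (add_le_add (euclNorm_mulVec_le _ _) (euclNorm_mulVec_le _ _))) _)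
  have hPe : euclNorm (rightPinv B *ᵥ e) ≤
      ‖rightPinv B‖ * (‖B‖ * euclNorm (g - f) + ‖B - A‖ * euclNorm f + euclNorm (d - c)) :=
    (euclNorm_mulVec_le _ _).trans (mul_le_mul_of_nonneg_left he (norm_nonneg _))
  linarith [euclNorm_sub_le (g - f) (rightPinv B *ᵥ e)]

theorem mn_dmm_consistency_general {m n : ℕ} (q : ℕ) (hq : 1 ≤ q)
    (A : Matrix (Fin m) (Fin n) ℝ) (hA : A.rank = m)
    (f : Fin n → ℝ) (c : Fin m → ℝ) (hfc : A.mulVec f = -c)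
    (K₁ K₂ K₃ : ℝ) (hK₁ : 0 < K₁) (hK₂ : 0 < K₂) (hK₃ : 0 < K₃)
    (Aτ : ℝ → Matrix (Fin m) (Fin n) ℝ)
    (fτ : ℝ → Fin n → ℝ) (cτ : ℝ → Fin m → ℝ)
    (hAτ : ∀ τ : ℝ, 0 < τ → ‖Aτ τ - A‖ ≤ K₁ * τ ^ q)
    (hfτ : ∀ τ : ℝ, 0 < τ → euclNorm (fτ τ - f) ≤ K₂ * τ ^ q)
    (hcτ : ∀ τ : ℝ, 0 < τ → euclNorm (cτ τ - c) ≤ K₃ * τ ^ q) :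
    ∃ τ₀ > (0 : ℝ), ∃ C > (0 : ℝ), ∀ τ : ℝ, 0 < τ → τ < τ₀ →
      IsUnit (Aτ τ * (Aτ τ)ᵀ) ∧
      euclNorm ((fτ τ - ((Aτ τ)ᵀ * (Aτ τ * (Aτ τ)ᵀ)⁻¹).mulVec
          ((Aτ τ).mulVec (fτ τ) + cτ τ)) - f) ≤ C * τ ^ q ∧
      euclNorm ((Aτ τ).mulVec (fτ τ - ((Aτ τ)ᵀ * (Aτ τ * (Aτ τ)ᵀ)⁻¹).mulVec
          ((Aτ τ).mulVec (fτ τ) + cτ τ)) + c) ≤ C * τ ^ q := by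
  have hU : IsUnit (A * Aᵀ) :=
    isUnit_of_rank_eq_card (by rw [rank_self_mul_transpose, hA, Fintype.card_fin])
  obtain ⟨P, hP, hnear⟩ := exists_pos_eventually_isUnit_and_norm_le hU
  obtain ⟨τ₀, hτ₀, hgood⟩ := (nhdsGT_basis 0).eventually_iff.mp
    ((tendsto_nhdsGT_of_norm_sub_le_pow (by omega) hAτ).eventually hnear)
  have hf := euclNorm_nonneg f
  refine ⟨τ₀, hτ₀, (1 + P * P) * K₂ + P * (K₁ * euclNorm f + K₃) + K₃, by positivity,
    fun τ hτ hττ₀ => ?_⟩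
  obtain ⟨hUτ, hPτ, hAτP⟩ := hgood ⟨hτ, hττ₀⟩
  have hAτ' := hAτ τ hτ
  have hfτ' := hfτ τ hτ
  have hcτ' := hcτ τ hτ
  refine ⟨hUτ, ?_, ?_⟩
  · calc _ ≤ _ := euclNorm_mnDMM_sub_le hfc (Aτ τ) (fτ τ) (cτ τ)
      _ ≤ (1 + P * P) * (K₂ * τ ^ q) + P * (K₁ * τ ^ q * euclNorm f + K₃ * τ ^ q) := by
          gcongr
          exacts [euclNorm_nonneg _, add_nonneg (by positivity) (euclNorm_nonneg _)]
      _ ≤ _ := by nlinarith [pow_pos hτ q]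
  · change euclNorm (Aτ τ *ᵥ mnDMM (Aτ τ) (fτ τ) (cτ τ) + c) ≤ _
    rw [mulVec_mnDMM hUτ, neg_add_eq_sub, euclNorm_sub_comm]
    exact hcτ'.trans (by gcongr; exact le_add_of_nonneg_left (by positivity))

/-- **consistency of MN-DMM.** Let `A` have full row rank `m < n`, and let
`f`, `c` satisfy the continuous multiplier condition `A f = -c`. If the discrete families
`A_τ`, `f_τ`, `c_τ` are consistent of order `q` (i.e. within `K·τ^q`, operator norm for
matrices and Euclidean norm for vectors), then there exist `τ₀ > 0` and `C > 0`, independent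
of `τ`, such that for `0 < τ < τ₀`: `A_τ A_τᵀ` is invertible, the MN-DMM vector
`f_MN^τ = f_τ - A_τ⁺(A_τ f_τ + c_τ)` (with `A_τ⁺ = A_τᵀ (A_τ A_τᵀ)⁻¹`) satisfies
`‖f_MN^τ - f‖₂ ≤ C τ^q`, and `‖A_τ f_MN^τ + c‖₂ ≤ C τ^q`. -/
theorem mn_dmm_consistency {m n : ℕ} (hmn : m < n) (q : ℕ) (hq : 1 ≤ q)
    (A : Matrix (Fin m) (Fin n) ℝ) (hA : A.rank = m)
    (f : Fin n → ℝ) (c : Fin m → ℝ) (hfc : A.mulVec f = -c)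
    (K₁ K₂ K₃ : ℝ) (hK₁ : 0 < K₁) (hK₂ : 0 < K₂) (hK₃ : 0 < K₃)
    (Aτ : ℝ → Matrix (Fin m) (Fin n) ℝ)
    (fτ : ℝ → Fin n → ℝ) (cτ : ℝ → Fin m → ℝ)
    (hAτ : ∀ τ : ℝ, 0 < τ → ‖Aτ τ - A‖ ≤ K₁ * τ ^ q)
    (hfτ : ∀ τ : ℝ, 0 < τ → euclNorm (fτ τ - f) ≤ K₂ * τ ^ q)
    (hcτ : ∀ τ : ℝ, 0 < τ → euclNorm (cτ τ - c) ≤ K₃ * τ ^ q) :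
    ∃ τ₀ > (0 : ℝ), ∃ C > (0 : ℝ), ∀ τ : ℝ, 0 < τ → τ < τ₀ →
      IsUnit (Aτ τ * (Aτ τ)ᵀ) ∧
      euclNorm ((fτ τ - ((Aτ τ)ᵀ * (Aτ τ * (Aτ τ)ᵀ)⁻¹).mulVec
          ((Aτ τ).mulVec (fτ τ) + cτ τ)) - f) ≤ C * τ ^ q ∧
      euclNorm ((Aτ τ).mulVec (fτ τ - ((Aτ τ)ᵀ * (Aτ τ * (Aτ τ)ᵀ)⁻¹).mulVec
          ((Aτ τ).mulVec (fτ τ) + cτ τ)) + c) ≤ C * τ ^ q :=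
  mn_dmm_consistency_general q hq A hA f c hfc K₁ K₂ K₃ hK₁ hK₂ hK₃ Aτ fτ cτ hAτ hfτ hcτ
end

section
/- Let m < n, let ψ : ℝⁿ → ℝᵐ, and let Λ : ℝⁿ × ℝⁿ → M_{m×n}(ℝ) be a discrete multiplier satisfying the discrete chain rule Λ(u, v) · (u − v) = ψ(u) − ψ(v) for all u, v ∈ ℝⁿ. Let x, x' ∈ ℝⁿ, τ > 0 and f ∈ ℝⁿ, write A := Λ(x', x), and suppose A Aᵀ is invertible, with A⁺ := Aᵀ (A Aᵀ)⁻¹. If x' satisfies the implicit Minimal ℓ² Norm DMM step x' = x + τ · (f − A⁺ A f), then ψ(x') = ψ(x); i.e. the MN-DMM step exactly preserves all m conserved quantities. -/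
open scoped Matrix

/-- **exact conservation of the MN-DMM step.** Let `Λ` be a discrete
multiplier satisfying the discrete chain rule `Λ(u,v) (u - v) = ψ(u) - ψ(v)`. If
`A := Λ(x', x)` has invertible Gram matrix `A Aᵀ`, with right pseudoinverse
`A⁺ = Aᵀ (A Aᵀ)⁻¹`, and `x'` satisfies the implicit MN-DMM step
`x' = x + τ (f - A⁺ A f)`, then `ψ(x') = ψ(x)`: all `m` conserved quantities are
exactly preserved. -/
theorem mn_dmm_step_conserves {m n : ℕ} (hmn : m < n)
    (ψ : (Fin n → ℝ) → (Fin m → ℝ))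
    (Λ : (Fin n → ℝ) → (Fin n → ℝ) → Matrix (Fin m) (Fin n) ℝ)
    (hchain : ∀ u v : Fin n → ℝ, (Λ u v).mulVec (u - v) = ψ u - ψ v)
    (x x' f : Fin n → ℝ) (τ : ℝ) (hτ : 0 < τ)
    (A : Matrix (Fin m) (Fin n) ℝ) (hA : A = Λ x' x)
    (hGram : IsUnit (A * Aᵀ))
    (hstep : x' = x + τ • (f - (Aᵀ * (A * Aᵀ)⁻¹).mulVec (A.mulVec f))) :
    ψ x' = ψ x := by
  have hdet : IsUnit (A * Aᵀ).det := (Matrix.isUnit_iff_isUnit_det _).mp hGram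
  have key : A.mulVec (x' - x) = ψ x' - ψ x := by rw [hA, hchain]
  have hdiff : x' - x = τ • (f - (Aᵀ * (A * Aᵀ)⁻¹).mulVec (A.mulVec f)) := by
    rw [hstep]; abel
  have hz : A.mulVec (f - (Aᵀ * (A * Aᵀ)⁻¹).mulVec (A.mulVec f)) = 0 := by
    rw [Matrix.mulVec_sub, Matrix.mulVec_mulVec, Matrix.mulVec_mulVec,
      ← Matrix.mul_assoc, Matrix.mul_nonsing_inv _ hdet, Matrix.one_mul, sub_self]
  have : ψ x' - ψ x = 0 := by
    rw [← key, hdiff, Matrix.mulVec_smul, hz, smul_zero]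
  exact sub_eq_zero.mp this
end
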